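/- Let n ≥ 1, let V be a finite-dimensional real inner product space, and let F : Seg_n → {subspaces of V} be intersection-monotone. Then the family {O_×(F)(s)}_{s ∈ Seg_n} is a transverse family: dim(∑_{s ∈ Seg_n} O_×(F)(s)) = ∑_{s ∈ Seg_n} dim(O_×(F)(s)). -/

import Mathlib

/-- Difference of subspaces: `W₁ ⊖ W₂ := W₁ ⊓ W₂ᗮ`. -/
noncomputable def sdiffOrtho {V : Type*} [NormedAddCommGroup V] [InnerProductSpace ℝ V]
    (W₁ W₂ : Submodule ℝ V) : Submodule ℝ V :=
  W₁ ⊓ W₂ᗮ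

/-- The set of segments of the linear poset `{1 < ⋯ < n}`, as a `Finset` of pairs
`(i, j)` with `1 ≤ i ≤ j ≤ n + 1` (the value `n + 1` encoding `∞`), carrying the
product order of `ℕ × ℕ`. -/
def SegFinset (n : ℕ) : Finset (ℕ × ℕ) :=
  (Finset.Icc 1 (n + 1) ×ˢ Finset.Icc 1 (n + 1)).filter fun p => p.1 ≤ p.2

/-- The ×-Linear Orthogonal Inverse of `F`, where `F` is assumed to incorporate the
convention `F 0 j = ⊥`. -/
noncomputable def Ox {V : Type*} [NormedAddCommGroup V] [InnerProductSpace ℝ V]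
    (F : ℕ → ℕ → Submodule ℝ V) (i j : ℕ) : Submodule ℝ V :=
  if i = j then sdiffOrtho (F i i) (F (i - 1) i)
  else
    sdiffOrtho (sdiffOrtho (F i j) (F i (j - 1)))
      (sdiffOrtho (F (i - 1) j) (F (i - 1) (j - 1)))

/-!
Each cell `(i, j)` of `Seg_n` sits on top of a square `K₁₀ ⊓ K₀₁ = K₀₀`, `K₁₀, K₀₁ ≤ K₁₁` of
values of `F`, and `O = (K₁₁ ⊖ K₁₀) ⊖ (K₀₁ ⊖ K₀₀)`. The intersection condition makes
`K₀₁ ⊖ K₀₀` meet `(K₁₁ ⊖ K₁₀)ᗮ` trivially, which gives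
`dim O = dim K₁₁ - dim K₁₀ - dim K₀₁ + dim K₀₀`; moreover `O ⊥ K₁₀ + K₀₁`, so
`O + K₁₀ + K₀₁ = K₁₁` by counting dimensions. By induction the `O_×(F)(s)` therefore span
`F((n+1, n+1))`, while their dimensions telescope to its dimension.
-/

open Module Submodule Finset

namespace Submodule

variable {𝕜 E : Type*} [RCLike 𝕜] [NormedAddCommGroup E] [InnerProductSpace 𝕜 E]
  [FiniteDimensional 𝕜 E]

theorem orthogonal_inf (K₁ K₂ : Submodule 𝕜 E) : (K₁ ⊓ K₂)ᗮ = K₁ᗮ ⊔ K₂ᗮ := by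
  rw [← orthogonal_orthogonal (K₁ᗮ ⊔ K₂ᗮ), ← inf_orthogonal, orthogonal_orthogonal,
    orthogonal_orthogonal]

theorem inf_orthogonal_inf_orthogonal_of_le {K₁ K₂ : Submodule 𝕜 E} (h : K₁ ≤ K₂) :
    K₂ ⊓ (K₂ ⊓ K₁ᗮ)ᗮ = K₁ := by
  rw [orthogonal_inf, orthogonal_orthogonal, sup_comm, inf_comm, sup_inf_assoc_of_le _ h,
    inf_comm, inf_orthogonal_eq_bot, sup_bot_eq]

theorem finrank_inf_orthogonal_add_finrank (G H : Submodule 𝕜 E) :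
    finrank 𝕜 ↥(G ⊓ Hᗮ) + finrank 𝕜 H = finrank 𝕜 G + finrank 𝕜 ↥(H ⊓ Gᗮ) := by
  have hsup := finrank_sup_add_finrank_inf_eq G Hᗮ
  have hH := finrank_add_finrank_orthogonal H
  have hGH := finrank_add_finrank_orthogonal (G ⊔ Hᗮ)
  rw [← inf_orthogonal, orthogonal_orthogonal, inf_comm] at hGH
  omega

section Square

variable {K₀₀ K₁₀ K₀₁ K₁₁ : Submodule 𝕜 E}

theorem inf_orthogonal_inf_orthogonal_eq_bot_of_inf_eq (h₀₁ : K₀₁ ≤ K₁₁)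
    (h₁₀ : K₁₀ ≤ K₁₁) (hinf : K₁₀ ⊓ K₀₁ = K₀₀) :
    K₀₁ ⊓ K₀₀ᗮ ⊓ (K₁₁ ⊓ K₁₀ᗮ)ᗮ = ⊥ := by
  refine eq_bot_iff.mpr fun v ⟨⟨hv₀₁, hv₀₀_perp⟩, hv⟩ => ?_
  have hv₁₀ : v ∈ K₁₀ := by
    rw [← inf_orthogonal_inf_orthogonal_of_le h₁₀]
    exact ⟨h₀₁ hv₀₁, hv⟩
  have hv₀₀ : v ∈ K₀₀ := hinf ▸ ⟨hv₁₀, hv₀₁⟩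
  exact (inf_orthogonal_eq_bot K₀₀).le ⟨hv₀₀, hv₀₀_perp⟩

theorem finrank_sdiff_sdiff_add (h₀₁ : K₀₁ ≤ K₁₁) (h₁₀ : K₁₀ ≤ K₁₁)
    (hinf : K₁₀ ⊓ K₀₁ = K₀₀) :
    finrank 𝕜 ↥(K₁₁ ⊓ K₁₀ᗮ ⊓ (K₀₁ ⊓ K₀₀ᗮ)ᗮ) + finrank 𝕜 K₁₀ + finrank 𝕜 K₀₁ =
      finrank 𝕜 K₁₁ + finrank 𝕜 K₀₀ := by
  have h := finrank_inf_orthogonal_add_finrank (K₁₁ ⊓ K₁₀ᗮ) (K₀₁ ⊓ K₀₀ᗮ)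
  rw [inf_orthogonal_inf_orthogonal_eq_bot_of_inf_eq h₀₁ h₁₀ hinf, finrank_bot] at h
  have h₁ := finrank_add_inf_finrank_orthogonal h₁₀
  have h₀ := finrank_add_inf_finrank_orthogonal (hinf ▸ inf_le_right : K₀₀ ≤ K₀₁)
  rw [inf_comm] at h₀ h₁
  omega

theorem sdiff_sdiff_sup_sup_eq (h₀₁ : K₀₁ ≤ K₁₁) (h₁₀ : K₁₀ ≤ K₁₁)
    (hinf : K₁₀ ⊓ K₀₁ = K₀₀) :
    K₁₁ ⊓ K₁₀ᗮ ⊓ (K₀₁ ⊓ K₀₀ᗮ)ᗮ ⊔ (K₁₀ ⊔ K₀₁) = K₁₁ := by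
  have hrank := finrank_sdiff_sdiff_add h₀₁ h₁₀ hinf
  set O := K₁₁ ⊓ K₁₀ᗮ ⊓ (K₀₁ ⊓ K₀₀ᗮ)ᗮ
  have h₀₀ : K₀₀ ≤ K₁₀ := hinf ▸ inf_le_left
  -- `K₀₁` is spanned by `K₀₀ ≤ K₁₀` and `K₀₁ ⊖ K₀₀`, both orthogonal to `O`.
  have hortho : O ⟂ K₁₀ ⊔ K₀₁ := by
    rw [← sup_orthogonal_inf_of_hasOrthogonalProjection (hinf ▸ inf_le_right : K₀₀ ≤ K₀₁),
      isOrtho_sup_right, isOrtho_sup_right, inf_comm K₀₀ᗮ]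
    refine ⟨?_, ?_, isOrtho_iff_le.mpr inf_le_right⟩ <;> rw [isOrtho_iff_le]
    · exact inf_le_left.trans inf_le_right
    · exact inf_le_left.trans (inf_le_right.trans (orthogonal_le h₀₀))
  have hsup := finrank_sup_add_finrank_inf_eq O (K₁₀ ⊔ K₀₁)
  rw [hortho.disjoint.eq_bot, finrank_bot] at hsup
  have hsup' := finrank_sup_add_finrank_inf_eq K₁₀ K₀₁
  rw [hinf] at hsup'
  exact eq_of_le_of_finrank_eq (sup_le (inf_le_left.trans inf_le_left) (sup_le h₁₀ h₀₁))
    (by omega)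

end Square

end Submodule

section IntersectionMonotone

variable {V : Type*} [NormedAddCommGroup V] [InnerProductSpace ℝ V] {n : ℕ}
  {F : ℕ → ℕ → Submodule ℝ V}

structure IsIntersectionMonotone (n : ℕ) (F : ℕ → ℕ → Submodule ℝ V) : Prop where
  zero_left : ∀ j, F 0 j = ⊥
  mono : ∀ i j k l : ℕ, 1 ≤ i → i ≤ j → j ≤ n + 1 → 1 ≤ k → k ≤ l → l ≤ n + 1 →
    i ≤ k → j ≤ l → F i j ≤ F k l
  inf_eq : ∀ i j : ℕ, 1 ≤ i → i < j → j ≤ n → F (i + 1) j ⊓ F i (j + 1) = F i j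

theorem Ox_succ_self (i : ℕ) : Ox F (i + 1) (i + 1) = F (i + 1) (i + 1) ⊓ (F i (i + 1))ᗮ := by
  simp [Ox, sdiffOrtho]

theorem Ox_succ_succ_of_lt {i j : ℕ} (h : i < j) :
    Ox F (i + 1) (j + 1) = F (i + 1) (j + 1) ⊓ (F (i + 1) j)ᗮ ⊓ (F i (j + 1) ⊓ (F i j)ᗮ)ᗮ := by
  simp [Ox, sdiffOrtho, h.ne]

theorem Ox_le (i j : ℕ) : Ox F i j ≤ F i j := by
  unfold Ox sdiffOrtho
  split_ifs with h
  · exact h ▸ inf_le_left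
  · exact inf_le_left.trans inf_le_left

namespace IsIntersectionMonotone

theorem le (hF : IsIntersectionMonotone n F) {i j k l : ℕ} (hij : i ≤ j) (hk : 1 ≤ k)
    (hkl : k ≤ l) (hl : l ≤ n + 1) (hik : i ≤ k) (hjl : j ≤ l) : F i j ≤ F k l := by
  rcases Nat.eq_zero_or_pos i with rfl | hi
  · exact hF.zero_left j ▸ bot_le
  · exact hF.mono i j k l hi hij (hjl.trans hl) hk hkl hl hik hjl

theorem square (hF : IsIntersectionMonotone n F) {i j : ℕ} (hij : i < j) (hj : j ≤ n) :
    F i (j + 1) ≤ F (i + 1) (j + 1) ∧ F (i + 1) j ≤ F (i + 1) (j + 1) ∧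
      F (i + 1) j ⊓ F i (j + 1) = F i j := by
  refine ⟨hF.le (by omega) (by omega) (by omega) (by omega) (by omega) le_rfl,
    hF.le (by omega) (by omega) (by omega) (by omega) le_rfl (by omega), ?_⟩
  rcases Nat.eq_zero_or_pos i with rfl | hi
  · simp [hF.zero_left]
  · exact hF.inf_eq i j hi hij hj

theorem sum_Ox_le (hF : IsIntersectionMonotone n F) :
    ∑ p ∈ SegFinset n, Ox F p.1 p.2 ≤ F (n + 1) (n + 1) := by
  refine sum_induction (fun p : ℕ × ℕ => Ox F p.1 p.2) (· ≤ F (n + 1) (n + 1))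
    (fun _ _ => sup_le) bot_le fun p hp => ?_
  simp only [SegFinset, mem_filter, mem_product, mem_Icc] at hp
  exact (Ox_le p.1 p.2).trans (hF.le (by omega) (by omega) le_rfl le_rfl (by omega) (by omega))

variable [FiniteDimensional ℝ V]

theorem finrank_Ox_succ_self_add (hF : IsIntersectionMonotone n F) {i : ℕ} (hi : i ≤ n) :
    finrank ℝ ↥(Ox F (i + 1) (i + 1)) + finrank ℝ ↥(F i (i + 1)) =
      finrank ℝ ↥(F (i + 1) (i + 1)) := by
  rw [Ox_succ_self, add_comm, inf_comm]
  exact finrank_add_inf_finrank_orthogonal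
    (hF.le (by omega) (by omega) le_rfl (by omega) (by omega) le_rfl)

theorem Ox_succ_self_sup_eq (hF : IsIntersectionMonotone n F) {i : ℕ} (hi : i ≤ n) :
    Ox F (i + 1) (i + 1) ⊔ F i (i + 1) = F (i + 1) (i + 1) := by
  rw [Ox_succ_self, sup_comm, inf_comm]
  exact sup_orthogonal_inf_of_hasOrthogonalProjection
    (hF.le (by omega) (by omega) le_rfl (by omega) (by omega) le_rfl)

theorem finrank_Ox_succ_succ_add (hF : IsIntersectionMonotone n F) {i j : ℕ} (hij : i < j)
    (hj : j ≤ n) :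
    finrank ℝ ↥(Ox F (i + 1) (j + 1)) + finrank ℝ ↥(F (i + 1) j) + finrank ℝ ↥(F i (j + 1)) =
      finrank ℝ ↥(F (i + 1) (j + 1)) + finrank ℝ ↥(F i j) := by
  obtain ⟨h₀₁, h₁₀, hinf⟩ := hF.square hij hj
  rw [Ox_succ_succ_of_lt hij]
  exact finrank_sdiff_sdiff_add h₀₁ h₁₀ hinf

theorem Ox_succ_succ_sup_sup_eq (hF : IsIntersectionMonotone n F) {i j : ℕ} (hij : i < j)
    (hj : j ≤ n) :
    Ox F (i + 1) (j + 1) ⊔ (F (i + 1) j ⊔ F i (j + 1)) = F (i + 1) (j + 1) := by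
  obtain ⟨h₀₁, h₁₀, hinf⟩ := hF.square hij hj
  rw [Ox_succ_succ_of_lt hij]
  exact sdiff_sdiff_sup_sup_eq h₀₁ h₁₀ hinf

theorem sum_finrank_Ox_row_add (hF : IsIntersectionMonotone n F) {i m : ℕ} (him : i ≤ m)
    (hm : m ≤ n) :
    ∑ j ∈ Icc (i + 1) (m + 1), finrank ℝ ↥(Ox F (i + 1) j) + finrank ℝ ↥(F i (m + 1)) =
      finrank ℝ ↥(F (i + 1) (m + 1)) := by
  induction m, him using Nat.le_induction with
  | base => rw [Icc_self, sum_singleton, hF.finrank_Ox_succ_self_add hm]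
  | succ m him ih =>
    have hcell := hF.finrank_Ox_succ_succ_add (i := i) (j := m + 1) (by omega) hm
    have hrow := ih (by omega)
    rw [sum_Icc_succ_top (by omega)]
    omega

theorem sum_finrank_Ox (hF : IsIntersectionMonotone n F) :
    ∑ p ∈ SegFinset n, finrank ℝ ↥(Ox F p.1 p.2) = finrank ℝ ↥(F (n + 1) (n + 1)) := by
  rw [sum_finset_product _ (Icc 1 (n + 1)) (fun i => Icc i (n + 1)) (by
    simp only [SegFinset, mem_filter, mem_product, mem_Icc]; omega)]
  suffices h : ∀ m ≤ n + 1,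
      ∑ i ∈ Icc 1 m, ∑ j ∈ Icc i (n + 1), finrank ℝ ↥(Ox F i j) = finrank ℝ ↥(F m (n + 1)) from
    h _ le_rfl
  intro m hm
  induction m with
  | zero => rw [hF.zero_left]; simp
  | succ m ih =>
    rw [sum_Icc_succ_top (Nat.le_add_left 1 m), ih (by omega), add_comm]
    exact hF.sum_finrank_Ox_row_add (i := m) (m := n) (by omega) le_rfl

theorem le_sum_Ox (hF : IsIntersectionMonotone n F) {i j : ℕ} (hij : i ≤ j) (hj : j ≤ n + 1) :
    F i j ≤ ∑ p ∈ SegFinset n, Ox F p.1 p.2 := by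
  have hOx : ∀ {i j}, 1 ≤ i → i ≤ j → j ≤ n + 1 → Ox F i j ≤ ∑ p ∈ SegFinset n, Ox F p.1 p.2 :=
    fun hi hij hj => single_le_sum_of_canonicallyOrdered (f := fun p : ℕ × ℕ => Ox F p.1 p.2)
      (i := (_, _)) (by simp only [SegFinset, mem_filter, mem_product, mem_Icc]; omega)
  induction i generalizing j with
  | zero => exact hF.zero_left j ▸ bot_le
  | succ i ih =>
    induction j, hij using Nat.le_induction with
    | base =>
      rw [← hF.Ox_succ_self_sup_eq (by omega)]
      exact sup_le (hOx (by omega) le_rfl hj) (ih (by omega) hj)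
    | succ j hij ihj =>
      rw [← hF.Ox_succ_succ_sup_sup_eq (by omega) (by omega)]
      exact sup_le (hOx (by omega) (by omega) hj) (sup_le (ihj (by omega)) (ih (by omega) hj))

end IsIntersectionMonotone

end IntersectionMonotone

theorem timesOrthogonalInverse_transverse_general
    {V : Type*} [NormedAddCommGroup V] [InnerProductSpace ℝ V] [FiniteDimensional ℝ V]
    (n : ℕ) (F : ℕ → ℕ → Submodule ℝ V)
    (hF0 : ∀ j : ℕ, F 0 j = ⊥)
    (hmono : ∀ i j k l : ℕ, 1 ≤ i → i ≤ j → j ≤ n + 1 → 1 ≤ k → k ≤ l → l ≤ n + 1 →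
      i ≤ k → j ≤ l → F i j ≤ F k l)
    (hint : ∀ i j : ℕ, 1 ≤ i → i < j → j ≤ n → F (i + 1) j ⊓ F i (j + 1) = F i j) :
    Module.finrank ℝ ↥(∑ p ∈ SegFinset n, Ox F p.1 p.2) =
      ∑ p ∈ SegFinset n, Module.finrank ℝ ↥(Ox F p.1 p.2) := by
  have hF : IsIntersectionMonotone n F := ⟨hF0, hmono, hint⟩
  have hspan : ∑ p ∈ SegFinset n, Ox F p.1 p.2 = F (n + 1) (n + 1) :=
    le_antisymm hF.sum_Ox_le (hF.le_sum_Ox le_rfl le_rfl)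
  rw [hspan, hF.sum_finrank_Ox]

/-- For an intersection-monotone function `F` on the segments of `{1 < ⋯ < n}`, the
family `{O_×(F)(s)}_{s ∈ Seg_n}` is a transverse family: the dimension of the sum of
all its members equals the sum of their dimensions. -/
theorem timesOrthogonalInverse_transverse
    {V : Type*} [NormedAddCommGroup V] [InnerProductSpace ℝ V] [FiniteDimensional ℝ V]
    (n : ℕ) (hn : 1 ≤ n) (F : ℕ → ℕ → Submodule ℝ V)
    (hF0 : ∀ j : ℕ, F 0 j = ⊥)
    (hmono : ∀ i j k l : ℕ, 1 ≤ i → i ≤ j → j ≤ n + 1 → 1 ≤ k → k ≤ l → l ≤ n + 1 →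
      i ≤ k → j ≤ l → F i j ≤ F k l)
    (hint : ∀ i j : ℕ, 1 ≤ i → i < j → j ≤ n → F (i + 1) j ⊓ F i (j + 1) = F i j) :
    Module.finrank ℝ ↥(∑ p ∈ SegFinset n, Ox F p.1 p.2) =
      ∑ p ∈ SegFinset n, Module.finrank ℝ ↥(Ox F p.1 p.2) :=
  timesOrthogonalInverse_transverse_general n F hF0 hmono hint
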